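/- The functions f_{3,1}, f_1, f_2, det_1 on the nilpotent cone N_3 (as defined via f_{3,1}(N)=N_{3,1}, det_1(N)=N_{2,1}N_{3,2}−N_{2,2}N_{3,1}, f_1(N)=N_{2,1}det_1(N)+N_{3,1}(N_{2,1}N_{3,3}−N_{3,1}N_{2,3}), f_2(N)=N_{3,2}det_1(N)+N_{3,1}(N_{1,1}N_{3,2}−N_{1,2}N_{3,1})) are invariant under conjugation by the unipotent group U of upper unitriangular 3×3 matrices: f(uNu⁻¹) = f(N) for all u ∈ U and all N with N³ = 0. -/
import Mathlib

open Matrix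

/-- The lower-left entry `f₃₁(N) = N₃₁`. -/
def f31 (N : Matrix (Fin 3) (Fin 3) ℂ) : ℂ := N 2 0

/-- `det₁(N) = N₂₁N₃₂ − N₂₂N₃₁`. -/
def det1 (N : Matrix (Fin 3) (Fin 3) ℂ) : ℂ := N 1 0 * N 2 1 - N 1 1 * N 2 0

/-- `f₁(N) = N₂₁·det₁(N) + N₃₁(N₂₁N₃₃ − N₃₁N₂₃)`. -/
def f1 (N : Matrix (Fin 3) (Fin 3) ℂ) : ℂ :=
  N 1 0 * det1 N + N 2 0 * (N 1 0 * N 2 2 - N 2 0 * N 1 2)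

/-- `f₂(N) = N₃₂·det₁(N) + N₃₁(N₁₁N₃₂ − N₁₂N₃₁)`. -/
def f2 (N : Matrix (Fin 3) (Fin 3) ℂ) : ℂ :=
  N 2 1 * det1 N + N 2 0 * (N 0 0 * N 2 1 - N 0 1 * N 2 0)

/-- The functions `f₃₁, det₁, f₁, f₂` on the nilpotent cone of `3 × 3` matrices
are invariant under conjugation by the group `U` of upper unitriangular
matrices. -/
theorem three_by_three_U_invariants
    (u N : Matrix (Fin 3) (Fin 3) ℂ) (hN : N ^ 3 = 0)
    (hd : ∀ i : Fin 3, u i i = 1)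
    (hl : ∀ i j : Fin 3, (j : ℕ) < (i : ℕ) → u i j = 0) :
    f31 (u * N * u⁻¹) = f31 N ∧ det1 (u * N * u⁻¹) = det1 N ∧
      f1 (u * N * u⁻¹) = f1 N ∧ f2 (u * N * u⁻¹) = f2 N := by
  set a := u 0 1 with ha
  set b := u 0 2 with hb
  set c := u 1 2 with hc
  have h0 : u = !![1, a, b; 0, 1, c; 0, 0, 1] := by
    ext i j
    fin_cases i <;> fin_cases j <;>
      simp [hd 0, hd 1, hd 2, hl 1 0 (by norm_num), hl 2 0 (by norm_num),
        hl 2 1 (by norm_num), ha, hb, hc, vecHead, vecTail]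
  have hinv : u⁻¹ = !![1, -a, a * c - b; 0, 1, -c; 0, 0, 1] := by
    rw [h0]
    apply inv_eq_right_inv
    ext i j
    fin_cases i <;> fin_cases j <;>
      simp [Matrix.mul_apply, Fin.sum_univ_succ] <;> ring
  rw [hinv, h0]
  refine ⟨?_, ?_, ?_, ?_⟩ <;>
    simp [f31, det1, f1, f2, Matrix.mul_apply, Matrix.vecMul, dotProduct, Fin.sum_univ_succ] <;> ring
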